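/- Let P, Q be probability measures on ℝ^d and Λ a probability measure on ℝ^d such that φ_P(ω) ≠ 0 and φ_Q(ω) ≠ 0 for Λ-almost every ω. Then PhD(P,Q) = 2 − 2 ∫ [ ∫∫ cos(⟨ω, x−y⟩) dP(x) dQ(y) ] / √( (∫∫ cos(⟨ω, x−x'⟩) dP(x) dP(x')) · (∫∫ cos(⟨ω, y−y'⟩) dQ(y) dQ(y')) ) dΛ(ω). -/

import Mathlib

open MeasureTheory RealInnerProductSpace

/-- The characteristic function of a measure `P` on `ℝ^d`. -/
noncomputable def charFunEucl {d : ℕ} (P : Measure (EuclideanSpace ℝ (Fin d)))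
    (ω : EuclideanSpace ℝ (Fin d)) : ℂ :=
  ∫ x, Complex.exp (Complex.I * (⟪ω, x⟫ : ℝ)) ∂P

/-- The phase function of a measure `P` on `ℝ^d`. -/
noncomputable def phase {d : ℕ} (P : Measure (EuclideanSpace ℝ (Fin d)))
    (ω : EuclideanSpace ℝ (Fin d)) : ℂ :=
  charFunEucl P ω / ((‖charFunEucl P ω‖ : ℝ) : ℂ)

/-- The phase discrepancy `PhD(P,Q) = ∫ |ρ_P(ω) − ρ_Q(ω)|² dΛ(ω)`. -/
noncomputable def PhD {d : ℕ} (P Q Λ : Measure (EuclideanSpace ℝ (Fin d))) : ℝ :=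
  ∫ ω, (‖phase P ω - phase Q ω‖) ^ 2 ∂Λ

section Aux

variable {d : ℕ}

local notation "E" => EuclideanSpace ℝ (Fin d)

open Complex

lemma cont_exp (ω : E) : Continuous fun x : E => Complex.exp (Complex.I * (⟪ω, x⟫ : ℝ)) := by
  exact Complex.continuous_exp.comp (continuous_const.mul
    (Complex.continuous_ofReal.comp (continuous_const.inner continuous_id)))

lemma abs_exp_I_mul (t : ℝ) : ‖Complex.exp (Complex.I * t)‖ = 1 := by
  rw [Complex.norm_exp]
  simp

lemma integrable_exp (P : Measure E) [IsProbabilityMeasure P] (ω : E) :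
    Integrable (fun x => Complex.exp (Complex.I * (⟪ω, x⟫ : ℝ))) P := by
  refine (integrable_const (1 : ℝ)).mono' (cont_exp ω).aestronglyMeasurable ?_
  filter_upwards with x
  rw [abs_exp_I_mul]

lemma abs_charFun_le (P : Measure E) [IsProbabilityMeasure P] (ω : E) :
    ‖charFunEucl P ω‖ ≤ 1 := by
  rw [charFunEucl]
  calc ‖∫ x, Complex.exp (Complex.I * (⟪ω, x⟫ : ℝ)) ∂P‖
      ≤ ∫ x, ‖Complex.exp (Complex.I * (⟪ω, x⟫ : ℝ))‖ ∂P := norm_integral_le_integral_norm _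
    _ ≤ 1 := by
        simp_rw [abs_exp_I_mul]
        simp

lemma re_integral {α : Type*} [MeasurableSpace α] {μ : Measure α} {f : α → ℂ}
    (hf : Integrable f μ) : (∫ x, f x ∂μ).re = ∫ x, (f x).re ∂μ := by
  have := integral_re hf
  simpa [RCLike.re_to_complex] using this.symm

lemma integrable_exp_sub (Q : Measure E) [IsProbabilityMeasure Q] (ω x : E) :
    Integrable (fun y : E => Complex.exp (Complex.I * (⟪ω, x - y⟫ : ℝ))) Q := by
  have hc : Continuous fun y : E => Complex.exp (Complex.I * (⟪ω, x - y⟫ : ℝ)) :=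
    Complex.continuous_exp.comp (continuous_const.mul (Complex.continuous_ofReal.comp
      (continuous_const.inner (continuous_const.sub continuous_id))))
  refine (integrable_const (1 : ℝ)).mono' hc.aestronglyMeasurable ?_
  filter_upwards with y
  rw [abs_exp_I_mul]

lemma inner_int (Q : Measure E) [IsProbabilityMeasure Q] (ω x : E) :
    ∫ y, Complex.exp (Complex.I * (⟪ω, x - y⟫ : ℝ)) ∂Q =
      Complex.exp (Complex.I * (⟪ω, x⟫ : ℝ)) * (starRingEnd ℂ) (charFunEucl Q ω) := by
  have h : ∀ y : E, Complex.exp (Complex.I * (⟪ω, x - y⟫ : ℝ)) =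
      Complex.exp (Complex.I * (⟪ω, x⟫ : ℝ)) *
        (starRingEnd ℂ) (Complex.exp (Complex.I * (⟪ω, y⟫ : ℝ))) := by
    intro y
    rw [← Complex.exp_conj]
    rw [← Complex.exp_add]
    congr 1
    rw [inner_sub_right]
    push_cast
    simp [map_mul, Complex.conj_I]
    ring
  simp_rw [h]
  rw [MeasureTheory.integral_const_mul, integral_conj]
  rfl

lemma cos_double (P Q : Measure E) [IsProbabilityMeasure P] [IsProbabilityMeasure Q] (ω : E) :
    ∫ x, ∫ y, Real.cos (⟪ω, x - y⟫ : ℝ) ∂Q ∂P =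
      (charFunEucl P ω * (starRingEnd ℂ) (charFunEucl Q ω)).re := by
  have h1 : ∀ x : E, ∫ y, Real.cos (⟪ω, x - y⟫ : ℝ) ∂Q =
      (Complex.exp (Complex.I * (⟪ω, x⟫ : ℝ)) * (starRingEnd ℂ) (charFunEucl Q ω)).re := by
    intro x
    rw [← inner_int]
    rw [re_integral (integrable_exp_sub Q ω x)]
    congr 1
    funext y
    rw [mul_comm, Complex.exp_ofReal_mul_I_re]
  simp_rw [h1]
  rw [show charFunEucl P ω * (starRingEnd ℂ) (charFunEucl Q ω) =
    ∫ x, Complex.exp (Complex.I * (⟪ω, x⟫ : ℝ)) * (starRingEnd ℂ) (charFunEucl Q ω) ∂P by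
      rw [MeasureTheory.integral_mul_const]; rfl]
  rw [re_integral ((integrable_exp P ω).mul_const _)]

lemma cont_charFun (P : Measure E) [IsProbabilityMeasure P] : Continuous (charFunEucl P) := by
  apply continuous_of_dominated (bound := fun _ => (1 : ℝ))
  · intro ω; exact (cont_exp ω).aestronglyMeasurable
  · intro ω; filter_upwards with x; rw [abs_exp_I_mul]
  · exact integrable_const 1
  · filter_upwards with x
    exact Complex.continuous_exp.comp (continuous_const.mul
      (Complex.continuous_ofReal.comp (continuous_id.inner continuous_const)))

lemma measurable_phase (P : Measure E) [IsProbabilityMeasure P] : Measurable (phase P) := by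
  have h1 : Measurable (charFunEucl P) := (cont_charFun P).measurable
  exact h1.div ((Complex.continuous_ofReal.comp
    (continuous_norm.comp (cont_charFun P))).measurable)

lemma abs_phase_le (P : Measure E) [IsProbabilityMeasure P] (ω : E) :
    ‖phase P ω‖ ≤ 1 := by
  rw [phase, norm_div, Complex.norm_real, norm_norm]
  exact div_self_le_one _

lemma abs_phase_eq (P : Measure E) [IsProbabilityMeasure P] {ω : E}
    (h : charFunEucl P ω ≠ 0) : ‖phase P ω‖ = 1 := by
  rw [phase, norm_div, Complex.norm_real, norm_norm]
  exact div_self (norm_ne_zero_iff.mpr h)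

lemma pointwise_eq (P Q : Measure E) [IsProbabilityMeasure P] [IsProbabilityMeasure Q]
    {ω : E} (hP : charFunEucl P ω ≠ 0) (hQ : charFunEucl Q ω ≠ 0) :
    (‖phase P ω - phase Q ω‖) ^ 2 =
      2 - 2 * ((∫ x, ∫ y, Real.cos (⟪ω, x - y⟫ : ℝ) ∂Q ∂P) /
        Real.sqrt ((∫ x, ∫ x', Real.cos (⟪ω, x - x'⟫ : ℝ) ∂P ∂P) *
          (∫ y, ∫ y', Real.cos (⟪ω, y - y'⟫ : ℝ) ∂Q ∂Q))) := by
  set zP := charFunEucl P ω with hzP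
  set zQ := charFunEucl Q ω with hzQ
  set r := ‖zP‖ with hr
  set s := ‖zQ‖ with hs
  have hr0 : 0 < r := norm_pos_iff.mpr hP
  have hs0 : 0 < s := norm_pos_iff.mpr hQ
  have hPP : (∫ x, ∫ x', Real.cos (⟪ω, x - x'⟫ : ℝ) ∂P ∂P) = r ^ 2 := by
    rw [cos_double, Complex.mul_conj, ← hzP]
    simp [Complex.normSq_eq_norm_sq, hr, ← Complex.ofReal_pow]
  have hQQ : (∫ y, ∫ y', Real.cos (⟪ω, y - y'⟫ : ℝ) ∂Q ∂Q) = s ^ 2 := by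
    rw [cos_double, Complex.mul_conj, ← hzQ]
    simp [Complex.normSq_eq_norm_sq, hs, ← Complex.ofReal_pow]
  have hPQ : (∫ x, ∫ y, Real.cos (⟪ω, x - y⟫ : ℝ) ∂Q ∂P) =
      (zP * (starRingEnd ℂ) zQ).re := cos_double P Q ω
  rw [hPP, hQQ, hPQ, ← mul_pow, Real.sqrt_sq (by positivity)]
  have hcross : (phase P ω * (starRingEnd ℂ) (phase Q ω)).re =
      (zP * (starRingEnd ℂ) zQ).re / (r * s) := by
    rw [phase, phase, ← hzP, ← hzQ, ← hr, ← hs, map_div₀, Complex.conj_ofReal]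
    rw [div_mul_div_comm, ← Complex.ofReal_mul, Complex.div_ofReal_re]
  have h1 : Complex.normSq (phase P ω) = 1 := by
    rw [Complex.normSq_eq_norm_sq, abs_phase_eq P hP]; norm_num
  have h2 : Complex.normSq (phase Q ω) = 1 := by
    rw [Complex.normSq_eq_norm_sq, abs_phase_eq Q hQ]; norm_num
  rw [Complex.sq_norm, Complex.normSq_sub, h1, h2, hcross]
  ring

end Aux

/-- `PhD(P,Q) = 2 − 2 ∫ E cos⟨ω, X−Y⟩ / √(E cos⟨ω, X−X'⟩ · E cos⟨ω, Y−Y'⟩) dΛ(ω)` whenever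
`φ_P` and `φ_Q` are `Λ`-a.e. nonvanishing. -/
theorem stmt_4 {d : ℕ} (P Q Λ : Measure (EuclideanSpace ℝ (Fin d)))
    [IsProbabilityMeasure P] [IsProbabilityMeasure Q] [IsProbabilityMeasure Λ]
    (hP : ∀ᵐ ω ∂Λ, charFunEucl P ω ≠ 0)
    (hQ : ∀ᵐ ω ∂Λ, charFunEucl Q ω ≠ 0) :
    PhD P Q Λ =
      2 - 2 * ∫ ω,
        (∫ x, ∫ y, Real.cos (⟪ω, x - y⟫ : ℝ) ∂Q ∂P) /
          Real.sqrt ((∫ x, ∫ x', Real.cos (⟪ω, x - x'⟫ : ℝ) ∂P ∂P) *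
            (∫ y, ∫ y', Real.cos (⟪ω, y - y'⟫ : ℝ) ∂Q ∂Q)) ∂Λ := by
  set h : EuclideanSpace ℝ (Fin d) → ℝ := fun ω =>
    (∫ x, ∫ y, Real.cos (⟪ω, x - y⟫ : ℝ) ∂Q ∂P) /
      Real.sqrt ((∫ x, ∫ x', Real.cos (⟪ω, x - x'⟫ : ℝ) ∂P ∂P) *
        (∫ y, ∫ y', Real.cos (⟪ω, y - y'⟫ : ℝ) ∂Q ∂Q)) with hh
  set g : EuclideanSpace ℝ (Fin d) → ℝ := fun ω =>
    (‖phase P ω - phase Q ω‖) ^ 2 with hg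
  have hae : g =ᵐ[Λ] fun ω => 2 - 2 * h ω := by
    filter_upwards [hP, hQ] with ω h1 h2
    exact pointwise_eq P Q h1 h2
  have hgint : Integrable g Λ := by
    refine (integrable_const (4 : ℝ)).mono' ?_ ?_
    · refine Measurable.aestronglyMeasurable ?_
      exact (continuous_norm.measurable.comp
        ((measurable_phase P).sub (measurable_phase Q))).pow_const 2
    · filter_upwards with ω
      rw [hg]
      have htri : ‖phase P ω - phase Q ω‖ ≤ 2 := by
        have h1 := norm_sub_le (phase P ω) (phase Q ω)
        have h2 := abs_phase_le P ω
        have h3 := abs_phase_le Q ω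
        linarith
      have h0 : (0:ℝ) ≤ ‖phase P ω - phase Q ω‖ := norm_nonneg _
      rw [Real.norm_eq_abs, _root_.abs_of_nonneg (pow_nonneg h0 2)]
      nlinarith
  have hint2 : Integrable (fun ω => 2 - 2 * h ω) Λ := hgint.congr hae
  have hint3 : Integrable (fun ω => 2 * h ω) Λ := by
    have := (integrable_const (2 : ℝ)).sub hint2
    refine this.congr ?_
    filter_upwards with ω
    simp only [Pi.sub_apply]
    ring
  have hhint : Integrable h Λ := by
    have := hint3.const_mul (1/2 : ℝ)
    refine this.congr ?_
    filter_upwards with ω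
    ring
  rw [PhD]
  rw [show (∫ ω, (‖phase P ω - phase Q ω‖) ^ 2 ∂Λ) = ∫ ω, g ω ∂Λ from rfl]
  rw [integral_congr_ae hae]
  rw [integral_sub (integrable_const 2) (hhint.const_mul 2)]
  rw [MeasureTheory.integral_const_mul]
  simp
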